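/- Let κ ∈ C_{-1}(0,∞) and λ ∈ ℂ, and define l_{κ,λ}(t) = Σ_{j=1}^∞ λ^{j-1} κ^{<j>}(t) for t > 0. Then l_{κ,λ} ∈ C_{-1}(0,∞) and it satisfies the resolvent identity l_{κ,λ}(t) = κ(t) + λ (κ * l_{κ,λ})(t) for all t > 0. (This is the conventional-function content of the operational relation I/(S_κ − λ) = l_{κ,λ} in the field of convolution quotients.) -/

import Mathlib

/-!
Write `κ(t) = t^(a-1) κ₁(t)` with `a > 0` and `κ₁` continuous on `[0,∞)`. The substitution
`τ = t s` turns the convolution of `t^(a-1) f₁` and `t^(b-1) g₁` into `t^(a+b-1)` times the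
average of `f₁(t(1-s)) g₁(t s)` against the Beta weight `(1-s)^(a-1) s^(b-1)`, which is again
continuous in `t`. Hence `κ^{<j+1>}(t) = t^((j+1)a-1) R_j(t)` with `R_j` continuous and, if
`|κ₁| ≤ M` on `[0,T]`, `|R_j| ≤ M^(j+1) ∏_{i<j} B(a,(i+1)a)` there. Since `B(a,(i+1)a) → 0`,
the ratio test makes `∑ λ^j t^(ja) R_j(t)` converge uniformly on `[0,T]`, so `l` is `t^(a-1)`
times a continuous function. The same domination lets the convolution with `κ` be taken
termwise, which gives `κ * l = ∑ λ^j κ^{<j+2>}`, i.e. the resolvent identity.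
-/

noncomputable section

/-- Laplace convolution of complex-valued functions on `(0,∞)`. -/
def convC (f g : ℝ → ℂ) : ℝ → ℂ := fun t => ∫ τ in (0:ℝ)..t, f (t - τ) * g τ

/-- The space `C_{-1}(0,∞)` of complex-valued functions: `f(t) = t^q f₁(t)` with
`q > -1` and `f₁` continuous on `[0,∞)`. -/
def Cm1C (f : ℝ → ℂ) : Prop :=
  ∃ q : ℝ, -1 < q ∧ ∃ f₁ : ℝ → ℂ, ContinuousOn f₁ (Set.Ici 0) ∧
    ∀ t : ℝ, 0 < t → f t = ((t ^ q : ℝ) : ℂ) * f₁ t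

/-- Convolution powers: `g^{<1>} = g`, `g^{<j+1>} = g * g^{<j>}` (and `g^{<0>} = 1`). -/
def convPowC (g : ℝ → ℂ) : ℕ → ℝ → ℂ
  | 0 => fun _ => 1
  | 1 => g
  | (j + 2) => convC g (convPowC g (j + 1))

/-- `h_p(t) = t^(p-1)/Γ(p)` as a complex-valued function. -/
def hkerC (p : ℝ) : ℝ → ℂ := fun t => ((t ^ (p - 1) / Real.Gamma p : ℝ) : ℂ)

open MeasureTheory intervalIntegral Set Filter Topology
open scoped Interval

def betaWeight (a b : ℝ) (s : ℝ) : ℝ := (1 - s) ^ (a - 1) * s ^ (b - 1)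

def betaCoef (a b : ℝ) : ℝ := ∫ s in (0:ℝ)..1, betaWeight a b s

lemma betaWeight_nonneg (a b : ℝ) {s : ℝ} (hs : s ∈ Icc (0:ℝ) 1) : 0 ≤ betaWeight a b s :=
  mul_nonneg (Real.rpow_nonneg (by linarith [hs.2]) _) (Real.rpow_nonneg hs.1 _)

lemma measurable_betaWeight (a b : ℝ) : Measurable (betaWeight a b) := by
  unfold betaWeight; fun_prop

lemma betaWeight_intervalIntegrable {a b : ℝ} (ha : 0 < a) (hb : 0 < b) :
    IntervalIntegrable (betaWeight a b) volume 0 1 := by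
  have hleft : IntervalIntegrable (betaWeight a b) volume 0 (1/2) := by
    refine (intervalIntegrable_rpow' (by linarith)).continuousOn_mul ?_
    refine ContinuousOn.rpow_const (by fun_prop) fun s hs => Or.inl ?_
    rw [uIcc_of_le (by norm_num)] at hs
    linarith [hs.2]
  have hright : IntervalIntegrable (betaWeight a b) volume (1/2) 1 := by
    have h := (intervalIntegrable_rpow' (a := 1/2) (b := 0) (r := a - 1)
      (by linarith)).comp_sub_left 1
    norm_num at h
    refine h.mul_continuousOn (ContinuousOn.rpow_const (by fun_prop) fun s hs => Or.inl ?_)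
    rw [uIcc_of_le (by norm_num)] at hs
    linarith [hs.1]
  exact hleft.trans hright

lemma tendsto_betaCoef_zero {a : ℝ} (ha : 0 < a) {b : ℕ → ℝ} (hb : Tendsto b atTop atTop) :
    Tendsto (fun j => betaCoef a (b j)) atTop (𝓝 0) := by
  have hlim := tendsto_integral_filter_of_dominated_convergence (μ := volume) (a := 0) (b := 1)
    (l := atTop) (F := fun j => betaWeight a (b j)) (f := fun _ => 0) (betaWeight a 1)
    (Eventually.of_forall fun j => (measurable_betaWeight a (b j)).aestronglyMeasurable) ?_
    (betaWeight_intervalIntegrable ha one_pos) ?_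
  · simpa [betaCoef] using hlim
  · filter_upwards [hb.eventually_ge_atTop 1] with j hj
    refine Eventually.of_forall fun s hs => ?_
    rw [uIoc_of_le zero_le_one] at hs
    rw [Real.norm_of_nonneg (betaWeight_nonneg a _ (Ioc_subset_Icc_self hs))]
    refine mul_le_mul_of_nonneg_left ?_ (Real.rpow_nonneg (by linarith [hs.2]) _)
    rw [sub_self, Real.rpow_zero]
    exact Real.rpow_le_one hs.1.le hs.2 (by linarith)
  · have hne : ∀ᵐ s : ℝ ∂volume, s ≠ 1 := by simp [ae_iff, measure_singleton]
    filter_upwards [hne] with s hs1 hs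
    rw [uIoc_of_le zero_le_one] at hs
    have hlt : s < 1 := lt_of_le_of_ne hs.2 hs1
    simpa [betaWeight, sub_eq_add_neg] using
      ((tendsto_rpow_atTop_of_base_lt_one s (by linarith [hs.1]) hlt).comp
        (tendsto_atTop_add_const_right _ (-1) hb)).const_mul ((1 - s) ^ (a - 1))

def convReg (a b : ℝ) (f₁ g₁ : ℝ → ℂ) (t : ℝ) : ℂ :=
  ∫ s in (0:ℝ)..1, betaWeight a b s • (f₁ (t * (1 - s)) * g₁ (t * s))

lemma convC_eq_rpow_mul_convReg {a b : ℝ} {f g f₁ g₁ : ℝ → ℂ}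
    (hf : ∀ t : ℝ, 0 < t → f t = ((t ^ (a - 1) : ℝ) : ℂ) * f₁ t)
    (hg : ∀ t : ℝ, 0 < t → g t = ((t ^ (b - 1) : ℝ) : ℂ) * g₁ t) {t : ℝ} (ht : 0 < t) :
    convC f g t = ((t ^ (a + b - 1) : ℝ) : ℂ) * convReg a b f₁ g₁ t := by
  have hsubst : convC f g t = t • ∫ s in (0:ℝ)..1, f (t - t * s) * g (t * s) := by
    rw [smul_integral_comp_mul_left (fun τ => f (t - τ) * g τ) t]
    simp [convC]
  have hne : ∀ᵐ s : ℝ ∂volume, s ≠ 1 := by simp [ae_iff, measure_singleton]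
  have hintegrand : (∫ s in (0:ℝ)..1, f (t - t * s) * g (t * s)) =
      ∫ s in (0:ℝ)..1, ((t ^ (a - 1) * t ^ (b - 1) : ℝ) : ℂ) *
        (betaWeight a b s • (f₁ (t * (1 - s)) * g₁ (t * s))) := by
    refine integral_congr_ae ?_
    filter_upwards [hne] with s hs1 hs
    rw [uIoc_of_le zero_le_one] at hs
    have h1s : 0 < 1 - s := sub_pos.mpr (lt_of_le_of_ne hs.2 hs1)
    rw [show t - t * s = t * (1 - s) by ring, hf _ (mul_pos ht h1s), hg _ (mul_pos ht hs.1),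
      Real.mul_rpow ht.le h1s.le, Real.mul_rpow ht.le hs.1.le, betaWeight, Complex.real_smul]
    push_cast
    ring
  have hpow : t * (t ^ (a - 1) * t ^ (b - 1)) = t ^ (a + b - 1) := by
    rw [← Real.rpow_add ht]
    nth_rewrite 1 [← Real.rpow_one t]
    rw [← Real.rpow_add ht]
    ring_nf
  rw [hsubst, hintegrand, intervalIntegral.integral_const_mul, Complex.real_smul, ← mul_assoc,
    ← Complex.ofReal_mul, hpow, convReg]

lemma mul_mem_Icc_of_mem_unitInterval {T x s : ℝ} (hx : x ∈ Icc 0 T) (hs : s ∈ Icc (0:ℝ) 1) :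
    x * s ∈ Icc 0 T :=
  ⟨mul_nonneg hx.1 hs.1, (mul_le_of_le_one_right hx.1 hs.2).trans hx.2⟩

lemma norm_convReg_integrand_le {a b T Mf Mg x s : ℝ} {f₁ g₁ : ℝ → ℂ}
    (hf : ∀ u ∈ Icc 0 T, ‖f₁ u‖ ≤ Mf) (hg : ∀ u ∈ Icc 0 T, ‖g₁ u‖ ≤ Mg)
    (hx : x ∈ Icc 0 T) (hs : s ∈ Icc (0:ℝ) 1) :
    ‖betaWeight a b s • (f₁ (x * (1 - s)) * g₁ (x * s))‖ ≤ betaWeight a b s * (Mf * Mg) := by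
  have h1s := mul_mem_Icc_of_mem_unitInterval hx (Set.Icc.mem_iff_one_sub_mem.mp hs)
  have hs' := mul_mem_Icc_of_mem_unitInterval hx hs
  rw [norm_smul, norm_mul, Real.norm_of_nonneg (betaWeight_nonneg a b hs)]
  exact mul_le_mul_of_nonneg_left (mul_le_mul (hf _ h1s) (hg _ hs') (norm_nonneg _)
    ((norm_nonneg _).trans (hf _ h1s))) (betaWeight_nonneg a b hs)

lemma convReg_integrand_intervalIntegrable {a b x : ℝ} (ha : 0 < a) (hb : 0 < b)
    {f₁ g₁ : ℝ → ℂ} (hf₁ : ContinuousOn f₁ (Ici 0)) (hg₁ : ContinuousOn g₁ (Ici 0))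
    (hx : 0 ≤ x) :
    IntervalIntegrable (fun s => betaWeight a b s • (f₁ (x * (1 - s)) * g₁ (x * s)))
      volume 0 1 := by
  refine (betaWeight_intervalIntegrable ha hb).smul_continuousOn ?_
  rw [uIcc_of_le zero_le_one]
  have hmem : ∀ s ∈ Icc (0:ℝ) 1, x * s ∈ Icc 0 x := fun s hs =>
    mul_mem_Icc_of_mem_unitInterval ⟨hx, le_rfl⟩ hs
  refine (hf₁.comp (by fun_prop) fun s hs => ?_).mul (hg₁.comp (by fun_prop) fun s hs => ?_)
  · exact (hmem _ (Set.Icc.mem_iff_one_sub_mem.mp hs)).1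
  · exact (hmem _ hs).1

lemma norm_convReg_le {a b : ℝ} (ha : 0 < a) (hb : 0 < b) {f₁ g₁ : ℝ → ℂ}
    {T Mf Mg : ℝ} (hf : ∀ u ∈ Icc 0 T, ‖f₁ u‖ ≤ Mf) (hg : ∀ u ∈ Icc 0 T, ‖g₁ u‖ ≤ Mg)
    {t : ℝ} (ht : t ∈ Icc 0 T) :
    ‖convReg a b f₁ g₁ t‖ ≤ betaCoef a b * (Mf * Mg) := by
  have hbound := norm_integral_le_of_norm_le zero_le_one
    (Eventually.of_forall fun s hs => norm_convReg_integrand_le hf hg ht (Ioc_subset_Icc_self hs))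
    ((betaWeight_intervalIntegrable ha hb).mul_const (Mf * Mg))
  rwa [intervalIntegral.integral_mul_const] at hbound

lemma continuousOn_convReg {a b : ℝ} (ha : 0 < a) (hb : 0 < b) {f₁ g₁ : ℝ → ℂ}
    (hf₁ : ContinuousOn f₁ (Ici 0)) (hg₁ : ContinuousOn g₁ (Ici 0)) :
    ContinuousOn (convReg a b f₁ g₁) (Ici 0) := by
  intro t₀ ht₀
  obtain ⟨Mf, hMf⟩ := (isCompact_Icc (a := 0) (b := t₀ + 1)).exists_bound_of_continuousOn
    (hf₁.mono Icc_subset_Ici_self)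
  obtain ⟨Mg, hMg⟩ := (isCompact_Icc (a := 0) (b := t₀ + 1)).exists_bound_of_continuousOn
    (hg₁.mono Icc_subset_Ici_self)
  have hnear : ∀ᶠ x in 𝓝[Ici 0] t₀, x ∈ Icc 0 (t₀ + 1) := by
    filter_upwards [self_mem_nhdsWithin,
      nhdsWithin_le_nhds (Iic_mem_nhds (lt_add_one t₀))] with x hx0 hx1 using ⟨hx0, hx1⟩
  refine continuousWithinAt_of_dominated_interval
    (bound := fun s => betaWeight a b s * (Mf * Mg)) ?_ ?_
    ((betaWeight_intervalIntegrable ha hb).mul_const _) ?_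
  · filter_upwards [hnear] with x hx
    exact (convReg_integrand_intervalIntegrable ha hb hf₁ hg₁ hx.1).def'.aestronglyMeasurable
  · filter_upwards [hnear] with x hx
    refine Eventually.of_forall fun s hs => norm_convReg_integrand_le hMf hMg hx ?_
    rw [uIoc_of_le zero_le_one] at hs
    exact Ioc_subset_Icc_self hs
  · refine Eventually.of_forall fun s hs => ?_
    rw [uIoc_of_le zero_le_one] at hs
    have hmaps : ∀ c ∈ Icc (0:ℝ) 1, MapsTo (fun x : ℝ => x * c) (Ici 0) (Ici 0) :=
      fun c hc x hx => mul_nonneg hx hc.1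
    have h1s := hmaps _ (Set.Icc.mem_iff_one_sub_mem.mp (Ioc_subset_Icc_self hs))
    have hs' := hmaps _ (Ioc_subset_Icc_self hs)
    exact (continuousWithinAt_const (b := betaWeight a b s)).smul
      ((ContinuousWithinAt.comp (f := fun x => x * (1 - s)) (hf₁ _ (h1s ht₀))
          (continuous_mul_const _).continuousWithinAt h1s).mul
        (ContinuousWithinAt.comp (f := fun x => x * s) (hg₁ _ (hs' ht₀))
          (continuous_mul_const _).continuousWithinAt hs'))

lemma hasSum_convReg {a b : ℝ} (ha : 0 < a) (hb : 0 < b) {f₁ g₁ : ℝ → ℂ} {G : ℕ → ℝ → ℂ}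
    (hf₁ : ContinuousOn f₁ (Ici 0)) (hG : ∀ n, ContinuousOn (G n) (Ici 0)) {t : ℝ} (ht : 0 ≤ t)
    {u : ℕ → ℝ} (hu : Summable u) (hGu : ∀ n, ∀ s ∈ Icc 0 t, ‖G n s‖ ≤ u n)
    (hGg : ∀ s ∈ Icc 0 t, HasSum (fun n => G n s) (g₁ s)) :
    HasSum (fun n => convReg a b f₁ (G n) t) (convReg a b f₁ g₁ t) := by
  obtain ⟨M, hM⟩ := (isCompact_Icc (a := 0) (b := t)).exists_bound_of_continuousOn
    (hf₁.mono Icc_subset_Ici_self)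
  have hunit : ∀ s ∈ Ι (0:ℝ) 1, s ∈ Icc (0:ℝ) 1 := fun s hs => by
    rw [uIoc_of_le zero_le_one] at hs
    exact Ioc_subset_Icc_self hs
  refine hasSum_integral_of_dominated_convergence (fun n s => betaWeight a b s * (M * u n))
    (fun n => (convReg_integrand_intervalIntegrable ha hb hf₁ (hG n) ht).def'.aestronglyMeasurable)
    (fun n => Eventually.of_forall fun s hs =>
      norm_convReg_integrand_le hM (hGu n) ⟨ht, le_rfl⟩ (hunit s hs))
    (Eventually.of_forall fun _ _ => (hu.mul_left M).mul_left _) ?_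
    (Eventually.of_forall fun s hs => ((hGg _ (mul_mem_Icc_of_mem_unitInterval ⟨ht, le_rfl⟩
      (hunit s hs))).mul_left (f₁ (t * (1 - s)))).const_smul (betaWeight a b s))
  simpa only [tsum_mul_left] using (betaWeight_intervalIntegrable ha hb).mul_const (M * ∑' n, u n)

lemma summable_prod_range_of_tendsto_zero {R : Type*} [NormedCommRing R] [CompleteSpace R]
    {r : ℕ → R} (hr : Tendsto r atTop (𝓝 0)) : Summable fun j => ∏ i ∈ Finset.range j, r i := by
  refine summable_of_ratio_norm_eventually_le (r := 1/2) (by norm_num) ?_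
  filter_upwards [(tendsto_zero_iff_norm_tendsto_zero.mp hr).eventually_le_const
    (by norm_num : (0:ℝ) < 1/2)] with n hn
  calc ‖∏ i ∈ Finset.range (n + 1), r i‖ ≤ ‖∏ i ∈ Finset.range n, r i‖ * ‖r n‖ := by
        rw [Finset.prod_range_succ]; exact norm_mul_le _ _
    _ ≤ 1/2 * ‖∏ i ∈ Finset.range n, r i‖ := by
        rw [mul_comm]; exact mul_le_mul_of_nonneg_right hn (norm_nonneg _)

def convPowReg (a : ℝ) (κ₁ : ℝ → ℂ) : ℕ → ℝ → ℂ
  | 0 => κ₁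
  | j + 1 => convReg a (((j:ℝ) + 1) * a) κ₁ (convPowReg a κ₁ j)

section ConvPowReg

variable {a : ℝ} {κ₁ : ℝ → ℂ}

lemma continuousOn_convPowReg (ha : 0 < a) (hκ₁ : ContinuousOn κ₁ (Ici 0)) (j : ℕ) :
    ContinuousOn (convPowReg a κ₁ j) (Ici 0) := by
  induction j with
  | zero => exact hκ₁
  | succ j ih => exact continuousOn_convReg ha (by positivity) hκ₁ ih

lemma convPowC_eq_rpow_mul_convPowReg {κ : ℝ → ℂ}
    (hκ : ∀ t : ℝ, 0 < t → κ t = ((t ^ (a - 1) : ℝ) : ℂ) * κ₁ t) (j : ℕ) {t : ℝ} (ht : 0 < t) :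
    convPowC κ (j + 1) t = ((t ^ (((j:ℝ) + 1) * a - 1) : ℝ) : ℂ) * convPowReg a κ₁ j t := by
  induction j generalizing t with
  | zero => simpa [convPowC, convPowReg] using hκ t ht
  | succ j ih =>
    rw [show convPowC κ (j + 1 + 1) t = convC κ (convPowC κ (j + 1)) t from rfl,
      convC_eq_rpow_mul_convReg hκ (fun τ hτ => ih hτ) ht, convPowReg]
    congr 3
    push_cast
    ring

lemma norm_convPowReg_le (ha : 0 < a) {T M : ℝ} (hM : ∀ u ∈ Icc 0 T, ‖κ₁ u‖ ≤ M) (j : ℕ)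
    {t : ℝ} (ht : t ∈ Icc 0 T) :
    ‖convPowReg a κ₁ j t‖ ≤ M * ∏ i ∈ Finset.range j, (betaCoef a (((i:ℝ) + 1) * a) * M) := by
  induction j generalizing t with
  | zero => simpa [convPowReg] using hM t ht
  | succ j ih =>
    calc ‖convPowReg a κ₁ (j + 1) t‖
        ≤ betaCoef a (((j:ℝ) + 1) * a) * (M * (M * ∏ i ∈ Finset.range j,
            (betaCoef a (((i:ℝ) + 1) * a) * M))) :=
          norm_convReg_le ha (by positivity) hM (fun _ hu => ih hu) ht
      _ = _ := by rw [Finset.prod_range_succ]; ring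

end ConvPowReg

def seriesTermReg (a : ℝ) (κ₁ : ℝ → ℂ) (lam : ℂ) (j : ℕ) (t : ℝ) : ℂ :=
  lam ^ j * ((t ^ (a * j) : ℝ) : ℂ) * convPowReg a κ₁ j t

section SeriesTermReg

variable {a : ℝ} {κ₁ : ℝ → ℂ} (lam : ℂ)

lemma continuousOn_seriesTermReg (ha : 0 < a) (hκ₁ : ContinuousOn κ₁ (Ici 0)) (j : ℕ) :
    ContinuousOn (seriesTermReg a κ₁ lam j) (Ici 0) := by
  have hpow : Continuous fun t : ℝ => ((t ^ (a * j) : ℝ) : ℂ) :=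
    Complex.continuous_ofReal.comp (Real.continuous_rpow_const (by positivity))
  exact (continuousOn_const.mul hpow.continuousOn).mul (continuousOn_convPowReg ha hκ₁ j)

lemma mul_convPowC_eq_rpow_mul_seriesTermReg {κ : ℝ → ℂ}
    (hκ : ∀ t : ℝ, 0 < t → κ t = ((t ^ (a - 1) : ℝ) : ℂ) * κ₁ t) (j : ℕ) {t : ℝ} (ht : 0 < t) :
    lam ^ j * convPowC κ (j + 1) t = ((t ^ (a - 1) : ℝ) : ℂ) * seriesTermReg a κ₁ lam j t := by
  rw [convPowC_eq_rpow_mul_convPowReg hκ j ht, seriesTermReg,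
    show ((j:ℝ) + 1) * a - 1 = (a - 1) + a * j by ring, Real.rpow_add ht]
  push_cast
  ring

lemma exists_summable_norm_seriesTermReg_le (ha : 0 < a) (hκ₁ : ContinuousOn κ₁ (Ici 0))
    (T : ℝ) : ∃ u : ℕ → ℝ, Summable u ∧ ∀ j, ∀ t ∈ Icc 0 T, ‖seriesTermReg a κ₁ lam j t‖ ≤ u j := by
  obtain ⟨M, hM⟩ := (isCompact_Icc (a := 0) (b := T)).exists_bound_of_continuousOn
    (hκ₁.mono Icc_subset_Ici_self)
  set r : ℕ → ℝ := fun i => ‖lam‖ * T ^ a * (betaCoef a (((i:ℝ) + 1) * a) * M)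
  have hr : Tendsto r atTop (𝓝 0) := by
    have hb : Tendsto (fun i : ℕ => ((i:ℝ) + 1) * a) atTop atTop :=
      (tendsto_natCast_atTop_atTop.atTop_add tendsto_const_nhds).atTop_mul_const ha
    simpa using ((tendsto_betaCoef_zero ha hb).mul_const M).const_mul (‖lam‖ * T ^ a)
  refine ⟨fun j => M * ∏ i ∈ Finset.range j, r i,
    (summable_prod_range_of_tendsto_zero hr).mul_left M, fun j t ht => ?_⟩
  have hpow : ‖((t ^ (a * j) : ℝ) : ℂ)‖ ≤ (T ^ a) ^ j := by
    rw [Complex.norm_real, Real.norm_of_nonneg (Real.rpow_nonneg ht.1 _),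
      Real.rpow_mul_natCast ht.1]
    exact pow_le_pow_left₀ (Real.rpow_nonneg ht.1 _) (Real.rpow_le_rpow ht.1 ht.2 ha.le) j
  calc ‖seriesTermReg a κ₁ lam j t‖
      ≤ ‖lam‖ ^ j * (T ^ a) ^ j *
          (M * ∏ i ∈ Finset.range j, (betaCoef a (((i:ℝ) + 1) * a) * M)) := by
        rw [seriesTermReg, norm_mul, norm_mul, norm_pow]
        have hT : 0 ≤ T := ht.1.trans ht.2
        gcongr
        exact norm_convPowReg_le ha hM j ht
    _ = M * ∏ i ∈ Finset.range j, r i := by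
        simp only [r, Finset.prod_mul_distrib, Finset.prod_const, Finset.card_range]
        ring

lemma continuousOn_tsum_seriesTermReg (ha : 0 < a) (hκ₁ : ContinuousOn κ₁ (Ici 0)) :
    ContinuousOn (fun t => ∑' j, seriesTermReg a κ₁ lam j t) (Ici 0) := by
  intro t₀ ht₀
  obtain ⟨u, hu, hbound⟩ := exists_summable_norm_seriesTermReg_le lam ha hκ₁ (t₀ + 1)
  have hcont := continuousOn_tsum
    (fun j => (continuousOn_seriesTermReg lam ha hκ₁ j).mono Icc_subset_Ici_self) hu hbound
    t₀ ⟨ht₀, by linarith⟩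
  rw [← Ici_inter_Iic] at hcont
  exact (continuousWithinAt_inter (Iic_mem_nhds (lt_add_one t₀))).mp hcont

lemma hasSum_convC_termwise (ha : 0 < a) (hκ₁ : ContinuousOn κ₁ (Ici 0)) {κ l : ℝ → ℂ}
    (hκ : ∀ t : ℝ, 0 < t → κ t = ((t ^ (a - 1) : ℝ) : ℂ) * κ₁ t)
    (hl : ∀ t : ℝ, 0 < t → l t = ((t ^ (a - 1) : ℝ) : ℂ) * ∑' j, seriesTermReg a κ₁ lam j t)
    {t : ℝ} (ht : 0 < t) :
    HasSum (fun j => lam ^ j * convPowC κ (j + 1 + 1) t) (convC κ l t) := by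
  obtain ⟨u, hu, hbound⟩ := exists_summable_norm_seriesTermReg_le lam ha hκ₁ t
  have hsum := hasSum_convReg ha ha hκ₁ (continuousOn_seriesTermReg lam ha hκ₁) ht.le hu hbound
    fun s hs => (Summable.of_norm_bounded hu fun j => hbound j s hs).hasSum
  rw [convC_eq_rpow_mul_convReg hκ hl ht]
  suffices hterm : ∀ j, lam ^ j * convPowC κ (j + 1 + 1) t =
      ((t ^ (a + a - 1) : ℝ) : ℂ) * convReg a a κ₁ (seriesTermReg a κ₁ lam j) t by
    simpa only [hterm] using hsum.mul_left ((t ^ (a + a - 1) : ℝ) : ℂ)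
  intro j
  have hconst : lam ^ j * convPowC κ (j + 1 + 1) t =
      convC κ (fun τ => lam ^ j * convPowC κ (j + 1) τ) t := by
    rw [show convPowC κ (j + 1 + 1) t = convC κ (convPowC κ (j + 1)) t from rfl]
    simp only [convC, ← intervalIntegral.integral_const_mul, mul_left_comm]
  rw [hconst, convC_eq_rpow_mul_convReg hκ
    (fun τ hτ => mul_convPowC_eq_rpow_mul_seriesTermReg lam hκ j hτ) ht]

end SeriesTermReg

/-- for `κ ∈ C_{-1}(0,∞)` and `λ ∈ ℂ`, the convolution series
`l_{κ,λ}(t) = Σ_{j≥1} λ^{j-1} κ^{<j>}(t)` belongs to `C_{-1}(0,∞)` and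
satisfies the resolvent identity `l_{κ,λ} = κ + λ (κ * l_{κ,λ})` on `(0,∞)`. -/
theorem convolution_series_resolvent (κ : ℝ → ℂ) (hκ : Cm1C κ) (lam : ℂ)
    (l : ℝ → ℂ) (hl : ∀ t : ℝ, l t = ∑' j : ℕ, lam ^ j * convPowC κ (j + 1) t) :
    Cm1C l ∧ ∀ t : ℝ, 0 < t → l t = κ t + lam * convC κ l t := by
  obtain ⟨q, hq, κ₁, hκ₁, hκq⟩ := hκ
  obtain ⟨a, rfl⟩ : ∃ a, q = a - 1 := ⟨q + 1, by ring⟩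
  have ha : 0 < a := by linarith
  have hlL : ∀ t : ℝ, 0 < t →
      l t = ((t ^ (a - 1) : ℝ) : ℂ) * ∑' j, seriesTermReg a κ₁ lam j t := fun t ht => by
    rw [hl, ← tsum_mul_left]
    exact tsum_congr fun j => mul_convPowC_eq_rpow_mul_seriesTermReg lam hκq j ht
  refine ⟨⟨a - 1, hq, _, continuousOn_tsum_seriesTermReg lam ha hκ₁, hlL⟩, fun t ht => ?_⟩
  have hsum : HasSum (fun j => lam ^ j * convPowC κ (j + 1) t)
      (lam ^ 0 * convPowC κ (0 + 1) t + lam * convC κ l t) :=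
    HasSum.zero_add (by simpa only [pow_succ', mul_assoc] using
      (hasSum_convC_termwise lam ha hκ₁ hκq hlL ht).mul_left lam)
  rw [hl, hsum.tsum_eq]
  simp [convPowC]
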